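/- For all x > 0, 4·φ(x)·(x/√(2π) + 1/2) < 1, where φ(x) = e^{-x²/2}/√(2π) is the standard normal density. -/

import Mathlib

/-!
Since `4 φ(x) (x / √(2π) + 1/2) = (4x + 2√(2π)) / (2π e^{x²/2})`, it suffices that
`4x + 2√(2π) < 2π e^{x²/2}`. Bounding `e^{x²/2} ≥ (1 + x²/4)²` turns this into a quartic
inequality with a margin of only about `0.05` near `x ≈ 0.55`; the cruder bound `1 + x²/2`
would fail there, and the bounds on `π` and `√(2π)` must be sharp to four decimals.
-/

open Real

noncomputable def stdphi (x : ℝ) : ℝ := Real.exp (-x ^ 2 / 2) / Real.sqrt (2 * Real.pi)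

lemma sq_one_add_sq_div_four_le_exp (x : ℝ) : (1 + x ^ 2 / 4) ^ 2 ≤ exp (x ^ 2 / 2) := by
  calc (1 + x ^ 2 / 4) ^ 2 ≤ exp (x ^ 2 / 4) ^ 2 := by
        gcongr
        linarith [add_one_le_exp (x ^ 2 / 4)]
    _ = exp (x ^ 2 / 2) := by rw [← exp_nat_mul]; ring_nf

lemma sqrt_two_pi_lt : √(2 * π) < 2.5067 := by
  rw [sqrt_lt' (by norm_num)]
  linarith [pi_lt_d6]

lemma four_mul_add_two_sqrt_two_pi_lt (x : ℝ) :
    4 * x + 2 * √(2 * π) < 2 * π * (1 + x ^ 2 / 4) ^ 2 := by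
  have hs := sqrt_two_pi_lt
  have hπ := pi_gt_d6
  nlinarith [sq_nonneg (x - 0.6), sq_nonneg (x ^ 2 - 0.36), sq_nonneg x, sq_nonneg (x ^ 2)]

lemma four_mul_stdphi_mul_eq (x : ℝ) :
    4 * stdphi x * (x / √(2 * π) + 1 / 2) = (4 * x + 2 * √(2 * π)) / (2 * π * exp (x ^ 2 / 2)) := by
  have hs2 : √(2 * π) ^ 2 = 2 * π := sq_sqrt (by positivity)
  rw [stdphi, neg_div, exp_neg]
  field_simp
  linear_combination -(4 * x + 2 * √(2 * π)) * hs2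

theorem stmt10_general (x : ℝ) :
    4 * stdphi x * (x / Real.sqrt (2 * Real.pi) + 1 / 2) < 1 := by
  rw [four_mul_stdphi_mul_eq, div_lt_one (by positivity)]
  calc 4 * x + 2 * √(2 * π) < 2 * π * (1 + x ^ 2 / 4) ^ 2 := four_mul_add_two_sqrt_two_pi_lt x
    _ ≤ 2 * π * exp (x ^ 2 / 2) := by gcongr; exact sq_one_add_sq_div_four_le_exp x

theorem stmt10 (x : ℝ) (hx : 0 < x) :
    4 * stdphi x * (x / Real.sqrt (2 * Real.pi) + 1 / 2) < 1 :=
  stmt10_general x
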